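/- arXiv:1412.2044 — 3 statements merged into one kernel-verified Lean document; each statement's English description precedes it below -/
import Mathlib

section
/- Let Y_1,...,Y_n be real numbers with n ≥ 2 and not all equal. Then the integral over θ ∈ ℝ and σ ∈ (0,∞) of σ^{-(n+1)} exp{−Σ_i (Y_i−θ)/σ} · exp{−Σ_i e^{−(Y_i−θ)/σ}} dθ dσ is finite. (Propriety of the posterior for the Gumbel(θ,σ) model under the improper prior π(θ,σ) = 1/σ.) -/
/-!
For fixed `σ` the substitution `u = exp (θ / σ)` turns the `θ`-integral into a Gamma integral: it
equals `Γ(n) σ^{-n} e^{-∑ Yᵢ/σ} (∑ e^{-Yᵢ/σ})^{-n}`. Bounding the sum from below by its term at a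
minimal observation `Y j` leaves `Γ(n) σ^{-n} e^{-c/σ}` with `c = ∑ Yᵢ - n Y j > 0`, and this is
integrable on `(0, ∞)` when `n ≥ 2` (substitute `σ = 1/u` to get a Gamma integrand again).
-/

open MeasureTheory Real Set Finset

lemma exists_card_nsmul_lt_sum {ι M : Type*} [Fintype ι] [AddCommMonoid M] [LinearOrder M]
    [IsOrderedCancelAddMonoid M] {Y : ι → M} (hY : ∃ i j, Y i ≠ Y j) :
    ∃ k, Fintype.card ι • Y k < ∑ i, Y i := by
  obtain ⟨i, j, hij⟩ := hY
  obtain ⟨k, -, hk⟩ := Finset.exists_min_image univ Y ⟨i, Finset.mem_univ i⟩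
  obtain ⟨l, hl⟩ : ∃ l, Y k < Y l := by
    by_contra! h
    exact hij (((h i).antisymm (hk i (Finset.mem_univ i))).trans
      ((h j).antisymm (hk j (Finset.mem_univ j))).symm)
  refine ⟨k, ?_⟩
  simpa using sum_lt_sum (fun l _ => hk l (Finset.mem_univ l)) ⟨l, Finset.mem_univ l, hl⟩

lemma lintegral_rpow_mul_exp_neg_mul_Ioi {a r : ℝ} (ha : 0 < a) (hr : 0 < r) :
    ∫⁻ t in Ioi 0, ENNReal.ofReal (t ^ (a - 1) * exp (-(r * t))) =
      ENNReal.ofReal ((1 / r) ^ a * Gamma a) := by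
  rw [← integral_rpow_mul_exp_neg_mul_Ioi ha hr, ofReal_integral_eq_lintegral_ofReal]
  · have h := integrableOn_rpow_mul_exp_neg_mul_rpow (p := 1) (s := a - 1) (by linarith) one_pos hr
    simp only [rpow_one, neg_mul] at h
    exact h
  · filter_upwards [ae_restrict_mem measurableSet_Ioi] with t ht
    exact mul_nonneg (rpow_nonneg (le_of_lt ht) _) (exp_pos _).le

lemma lintegral_exp_mul_div_mul_exp_neg_mul_exp_div {a r s : ℝ} (ha : 0 < a) (hr : 0 < r)
    (hs : 0 < s) :
    ∫⁻ θ, ENNReal.ofReal (exp (a * θ / s) * exp (-(r * exp (θ / s)))) =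
      ENNReal.ofReal (s * ((1 / r) ^ a * Gamma a)) := by
  have himage : (fun θ => exp (θ / s)) '' Set.univ = Ioi (0 : ℝ) := by
    ext u
    refine ⟨?_, fun hu => ⟨s * log u, trivial, ?_⟩⟩
    · rintro ⟨θ, -, rfl⟩
      exact exp_pos _
    · simp [hs.ne', exp_log (mem_Ioi.1 hu)]
  have hderiv (θ : ℝ) (_ : θ ∈ Set.univ) :
      HasDerivWithinAt (fun θ => exp (θ / s)) (exp (θ / s) / s) Set.univ θ :=
    ((hasDerivAt_id θ).div_const s).exp.hasDerivWithinAt.congr_deriv (by simp [div_eq_mul_inv])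
  have hinj : InjOn (fun θ => exp (θ / s)) Set.univ := fun x _ y _ h => by
    simpa [hs.ne'] using exp_injective h
  have hsubst := lintegral_image_eq_lintegral_abs_deriv_mul MeasurableSet.univ hderiv hinj
    (fun u => ENNReal.ofReal (s * (u ^ (a - 1) * exp (-(r * u)))))
  simp_rw [ENNReal.ofReal_mul hs.le, lintegral_const_mul' _ _ ENNReal.ofReal_ne_top,
    himage, lintegral_rpow_mul_exp_neg_mul_Ioi ha hr, Measure.restrict_univ] at hsubst
  rw [ENNReal.ofReal_mul hs.le, hsubst]
  congr 1 with θ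
  rw [← ENNReal.ofReal_mul hs.le, ← ENNReal.ofReal_mul (abs_nonneg _), abs_of_pos (by positivity),
    ← exp_mul]
  congr 1
  field_simp
  rw [← exp_add]
  ring_nf

lemma integrableOn_rpow_neg_mul_exp_neg_div {a c : ℝ} (ha : 1 < a) (hc : 0 < c) :
    IntegrableOn (fun x => x ^ (-a) * exp (-(c / x))) (Ioi 0) := by
  have h := (integrableOn_Ioi_comp_rpow_iff' _ (p := -1) (by norm_num)).2
    (integrableOn_rpow_mul_exp_neg_mul_rpow (s := a - 2) (by linarith) one_pos hc)
  refine h.congr_fun (fun x hx => ?_) measurableSet_Ioi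
  have hx : 0 < x := hx
  simp only [smul_eq_mul, rpow_one, rpow_neg_one]
  rw [inv_rpow hx.le, ← rpow_neg hx.le, ← mul_assoc, ← rpow_add hx]
  ring_nf

section GumbelLikelihood

variable {ι : Type*} [Fintype ι] (Y : ι → ℝ) {σ : ℝ}

lemma lintegral_gumbel_likelihood [Nonempty ι] (hσ : 0 < σ) :
    ∫⁻ θ, ENNReal.ofReal (σ ^ (-((Fintype.card ι : ℝ) + 1)) * exp (-∑ i, (Y i - θ) / σ)
        * exp (-∑ i, exp (-(Y i - θ) / σ))) =
      ENNReal.ofReal (σ ^ (-(Fintype.card ι : ℝ)) * exp (-(∑ i, Y i) / σ) *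
        ((1 / ∑ i, exp (-Y i / σ)) ^ (Fintype.card ι : ℝ) * Gamma (Fintype.card ι))) := by
  set n : ℝ := (Fintype.card ι : ℝ)
  set A := ∑ i, exp (-Y i / σ)
  have hfactor (θ : ℝ) : σ ^ (-(n + 1)) * exp (-∑ i, (Y i - θ) / σ)
      * exp (-∑ i, exp (-(Y i - θ) / σ)) =
      σ ^ (-(n + 1)) * exp (-(∑ i, Y i) / σ) * (exp (n * θ / σ) * exp (-(A * exp (θ / σ)))) := by
    have hlin : -∑ i, (Y i - θ) / σ = -(∑ i, Y i) / σ + n * θ / σ := by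
      simp only [← sum_div, sum_sub_distrib, sum_const, card_univ, nsmul_eq_mul, n]
      ring
    have hexp : ∑ i, exp (-(Y i - θ) / σ) = A * exp (θ / σ) := by
      simp only [A, sum_mul, ← exp_add]
      congr 1 with i
      ring_nf
    rw [hlin, hexp, exp_add]
    ring
  have hA : 0 < A := sum_pos (fun i _ => exp_pos _) univ_nonempty
  simp_rw [hfactor,
    ENNReal.ofReal_mul (by positivity : 0 ≤ σ ^ (-(n + 1)) * exp (-(∑ i, Y i) / σ))]
  rw [lintegral_const_mul' _ _ ENNReal.ofReal_ne_top,
    lintegral_exp_mul_div_mul_exp_neg_mul_exp_div (by positivity) hA hσ,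
    ← ENNReal.ofReal_mul (by positivity)]
  congr 1
  rw [rpow_neg hσ.le, rpow_neg hσ.le, rpow_add_one hσ.ne']
  field_simp

lemma lintegral_gumbel_likelihood_le (j : ι) (hσ : 0 < σ) :
    ∫⁻ θ, ENNReal.ofReal (σ ^ (-((Fintype.card ι : ℝ) + 1)) * exp (-∑ i, (Y i - θ) / σ)
        * exp (-∑ i, exp (-(Y i - θ) / σ))) ≤
      ENNReal.ofReal (Gamma (Fintype.card ι) *
        (σ ^ (-(Fintype.card ι : ℝ)) * exp (-((∑ i, Y i - Fintype.card ι * Y j) / σ)))) := by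
  have : Nonempty ι := ⟨j⟩
  set n : ℝ := (Fintype.card ι : ℝ)
  have hA : exp (-Y j / σ) ≤ ∑ i, exp (-Y i / σ) :=
    single_le_sum (f := fun i => exp (-Y i / σ)) (fun i _ => (exp_pos _).le) (Finset.mem_univ j)
  have hpow : (1 / ∑ i, exp (-Y i / σ)) ^ n ≤ exp (n * Y j / σ) :=
    calc (1 / ∑ i, exp (-Y i / σ)) ^ n ≤ (1 / exp (-Y j / σ)) ^ n :=
          rpow_le_rpow (by positivity) (one_div_le_one_div_of_le (exp_pos _) hA) (by positivity)
      _ = exp (n * Y j / σ) := by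
          rw [one_div, ← exp_neg, ← exp_mul]
          ring_nf
  rw [lintegral_gumbel_likelihood Y hσ]
  refine ENNReal.ofReal_le_ofReal ?_
  calc σ ^ (-n) * exp (-(∑ i, Y i) / σ) * ((1 / ∑ i, exp (-Y i / σ)) ^ n * Gamma n)
      = Gamma n * (σ ^ (-n) * (exp (-(∑ i, Y i) / σ) * (1 / ∑ i, exp (-Y i / σ)) ^ n)) := by
        ring
    _ ≤ Gamma n * (σ ^ (-n) * (exp (-(∑ i, Y i) / σ) * exp (n * Y j / σ))) := by gcongr
    _ = Gamma n * (σ ^ (-n) * exp (-((∑ i, Y i - n * Y j) / σ))) := by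
        rw [← exp_add]
        ring_nf

end GumbelLikelihood

/-- Propriety of the posterior for the Gumbel `(θ,σ)` model under the improper
prior `π(θ,σ) = 1/σ`: if `n ≥ 2` and the observations are not all equal, then
`∫∫ σ^{-(n+1)} exp{−Σ (Yᵢ−θ)/σ} exp{−Σ e^{−(Yᵢ−θ)/σ}} dθ dσ < ∞`. -/
theorem stmt_4 (n : ℕ) (hn : 2 ≤ n) (Y : Fin n → ℝ)
    (hY : ∃ i j, Y i ≠ Y j) :
    IntegrableOn
      (fun p : ℝ × ℝ =>
        p.2 ^ (-((n : ℝ) + 1))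
          * Real.exp (-∑ i, (Y i - p.1) / p.2)
          * Real.exp (-∑ i, Real.exp (-(Y i - p.1) / p.2)))
      (Set.univ ×ˢ Ioi (0 : ℝ)) volume := by
  obtain ⟨j, hj⟩ := exists_card_nsmul_lt_sum hY
  rw [Fintype.card_fin, nsmul_eq_mul] at hj
  have hbound := (integrableOn_rpow_neg_mul_exp_neg_div (by exact_mod_cast hn : 1 < (n : ℝ))
    (sub_pos.2 hj)).const_mul (Gamma n)
  refine ⟨by fun_prop, (hasFiniteIntegral_iff_ofReal ?_).2 ?_⟩
  · filter_upwards [ae_restrict_mem (MeasurableSet.univ.prod measurableSet_Ioi)] with p hp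
    have : 0 < p.2 := hp.2
    positivity
  rw [Measure.volume_eq_prod, ← Measure.prod_restrict, Measure.restrict_univ,
    lintegral_prod_symm _ (by fun_prop)]
  refine lt_of_le_of_lt (setLIntegral_mono' measurableSet_Ioi fun σ (hσ : 0 < σ) => ?_)
    hbound.lintegral_lt_top
  simpa using lintegral_gumbel_likelihood_le Y j hσ
end

section
/- Tail-mass bound in the embedded case: with prior density π_α(α) ∝ α^{a₁−1}(1−α)^{a₂−1} (Beta(a₁,a₂), a₂ < d₂) and absolutely continuous prior on (θ₁,ψ) ∈ ℝ^{d₁}×ℝ^{d₂} with bounded density near (θ₁*,0), the prior mass of the set {(α,θ₁,ψ) : ‖θ₁−θ₁*‖ ≤ δ_n, (1−α)‖ψ‖ ≤ δ_n, 1−α > z_n} is bounded up to a constant by δ_n^{d₁} ∫_{z_n}^1 (δ_n/u)^{d₂} u^{a₂−1} du ≤ C δ_n^{d₁+d₂} z_n^{a₂−d₂}/(d₂−a₂). -/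
/-!
Bound `p` by `B`. By Tonelli, the mass becomes an integral over the weight `α`, and the section
of the set at `α` is the product of the balls of radii `δ` around `θ₁*` and `δ / (1 - α)` around
`0`, of volume `≍ δ ^ d₁ (δ / (1 - α)) ^ d₂`. What is left is
`δ ^ (d₁ + d₂) ∫_{1 - α > z} α ^ (a₁ - 1) (1 - α) ^ (a₂ - d₂ - 1) dα`. On `α < 1/2` the second
factor is bounded and `α ^ (a₁ - 1)` is integrable; on `α ≥ 1/2` the first factor is bounded and
`∫_z^∞ u ^ (a₂ - d₂ - 1) du = z ^ (a₂ - d₂) / (d₂ - a₂)` because `a₂ < d₂`. Since `z ≤ 1`, the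
constant from the first piece is also absorbed into `z ^ (a₂ - d₂) ≥ 1`.
-/

open MeasureTheory Set Metric Module
open scoped ENNReal

namespace Real

theorem rpow_mul_one_sub_rpow_le {a b x : ℝ} (hb : b ≤ 1) (hx : x ∈ Ioo 0 1) :
    x ^ (a - 1) * (1 - x) ^ (b - 1)
      ≤ (1 / 2) ^ (b - 1) * x ^ (a - 1) + max ((1 / 2) ^ (a - 1)) 1 * (1 - x) ^ (b - 1) := by
  obtain ⟨hx0, hx1⟩ := hx
  have hxa : 0 ≤ x ^ (a - 1) := rpow_nonneg hx0.le _
  have hxb : 0 ≤ (1 - x) ^ (b - 1) := rpow_nonneg (by linarith) _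
  have hmax : 0 ≤ max ((1 / 2 : ℝ) ^ (a - 1)) 1 := le_max_of_le_right zero_le_one
  rcases lt_or_ge x (1 / 2) with hx2 | hx2
  · have : (1 - x) ^ (b - 1) ≤ (1 / 2) ^ (b - 1) :=
      rpow_le_rpow_of_nonpos (by norm_num) (by linarith) (by linarith)
    nlinarith [mul_nonneg hmax hxb]
  · have : x ^ (a - 1) ≤ max ((1 / 2) ^ (a - 1)) 1 := by
      rcases le_total a 1 with ha | ha
      · exact le_max_of_le_left (rpow_le_rpow_of_nonpos (by norm_num) hx2 (by linarith))
      · exact le_max_of_le_right (rpow_le_one hx0.le hx1.le (by linarith))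
    nlinarith [mul_nonneg (rpow_nonneg (by norm_num : (0:ℝ) ≤ 1 / 2) (b - 1)) hxa]

end Real

theorem lintegral_Ioo_zero_one_rpow {a : ℝ} (ha : 0 < a) :
    ∫⁻ x in Ioo 0 1, ENNReal.ofReal (x ^ (a - 1)) = ENNReal.ofReal (1 / a) := by
  have hint : IntegrableOn (fun x : ℝ ↦ x ^ (a - 1)) (Ioc 0 1) :=
    (intervalIntegral.intervalIntegrable_rpow' (by linarith)).1
  rw [← ofReal_integral_eq_lintegral_ofReal (hint.mono_set Ioo_subset_Ioc_self)
      ((ae_restrict_iff' measurableSet_Ioo).2 (.of_forall fun x hx ↦ Real.rpow_nonneg hx.1.le _)),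
    ← integral_Ioc_eq_integral_Ioo, ← intervalIntegral.integral_of_le zero_le_one,
    integral_rpow (.inl (by linarith))]
  simp [Real.zero_rpow ha.ne']

theorem setLIntegral_one_sub_rpow_of_neg {b z : ℝ} (hb : b < 0) (hz : 0 < z) :
    ∫⁻ x in (fun x ↦ 1 - x) ⁻¹' Ioi z, ENNReal.ofReal ((1 - x) ^ (b - 1))
      = ENNReal.ofReal (z ^ b / -b) := by
  refine ((Measure.measurePreserving_sub_left volume (1 : ℝ)).setLIntegral_comp_preimage
    (f := fun u ↦ ENNReal.ofReal (u ^ (b - 1))) measurableSet_Ioi (by fun_prop)).trans ?_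
  rw [← ofReal_integral_eq_lintegral_ofReal (integrableOn_Ioi_rpow_of_lt (by linarith) hz)
      ((ae_restrict_iff' measurableSet_Ioi).2
        (.of_forall fun u hu ↦ Real.rpow_nonneg (hz.trans hu).le _)),
    integral_Ioi_rpow_of_lt (by linarith) hz, sub_add_cancel, neg_div, div_neg]

theorem exists_setLIntegral_beta_tail_le {a b : ℝ} (ha : 0 < a) (hb : b < 0) :
    ∃ K : ℝ, 0 ≤ K ∧ ∀ z, 0 < z → z ≤ 1 →
      ∫⁻ x in Ioo 0 1 ∩ (fun x ↦ 1 - x) ⁻¹' Ioi z,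
          ENNReal.ofReal (x ^ (a - 1) * (1 - x) ^ (b - 1))
        ≤ ENNReal.ofReal (K * z ^ b) := by
  set cb : ℝ := (1 / 2) ^ (b - 1)
  set ca : ℝ := max ((1 / 2) ^ (a - 1)) 1
  have hcb : 0 ≤ cb := Real.rpow_nonneg (by norm_num) _
  have hca : 0 ≤ ca := le_max_of_le_right zero_le_one
  have hb' : 0 < -b := neg_pos.2 hb
  refine ⟨cb / a + ca / -b, by positivity, fun z hz hz1 ↦ ?_⟩
  have hzb : 1 ≤ z ^ b := Real.one_le_rpow_of_pos_of_le_one_of_nonpos hz hz1 hb.le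
  have hA : MeasurableSet (Ioo 0 1 ∩ (fun x : ℝ ↦ 1 - x) ⁻¹' Ioi z) :=
    measurableSet_Ioo.inter (measurableSet_Ioi.preimage (by fun_prop))
  calc ∫⁻ x in Ioo 0 1 ∩ (fun x ↦ 1 - x) ⁻¹' Ioi z,
          ENNReal.ofReal (x ^ (a - 1) * (1 - x) ^ (b - 1))
      ≤ ∫⁻ x in Ioo 0 1 ∩ (fun x ↦ 1 - x) ⁻¹' Ioi z,
          ENNReal.ofReal cb * ENNReal.ofReal (x ^ (a - 1))
            + ENNReal.ofReal ca * ENNReal.ofReal ((1 - x) ^ (b - 1)) := by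
        refine setLIntegral_mono' hA fun x hx ↦ ?_
        rw [← ENNReal.ofReal_mul hcb, ← ENNReal.ofReal_mul hca, ← ENNReal.ofReal_add
          (mul_nonneg hcb (Real.rpow_nonneg hx.1.1.le _))
          (mul_nonneg hca (Real.rpow_nonneg (by linarith [hx.1.2]) _))]
        exact ENNReal.ofReal_le_ofReal (Real.rpow_mul_one_sub_rpow_le (by linarith) hx.1)
    _ ≤ ENNReal.ofReal cb * (∫⁻ x in Ioo 0 1, ENNReal.ofReal (x ^ (a - 1)))
          + ENNReal.ofReal ca * ∫⁻ x in (fun x ↦ 1 - x) ⁻¹' Ioi z,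
              ENNReal.ofReal ((1 - x) ^ (b - 1)) := by
        rw [lintegral_add_left (by fun_prop), lintegral_const_mul _ (by fun_prop),
          lintegral_const_mul _ (by fun_prop)]
        gcongr
        exacts [inter_subset_left, inter_subset_right]
    _ = ENNReal.ofReal (cb * (1 / a) + ca * (z ^ b / -b)) := by
        rw [lintegral_Ioo_zero_one_rpow ha, setLIntegral_one_sub_rpow_of_neg hb hz,
          ← ENNReal.ofReal_mul hcb, ← ENNReal.ofReal_mul hca, ← ENNReal.ofReal_add (by positivity)
          (mul_nonneg hca (div_nonneg (by positivity) (by linarith)))]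
    _ ≤ ENNReal.ofReal ((cb / a + ca / -b) * z ^ b) := by
        refine ENNReal.ofReal_le_ofReal ?_
        have : cb * (1 / a) ≤ cb / a * z ^ b :=
          (mul_one_div cb a).trans_le (le_mul_of_one_le_right (by positivity) hzb)
        have h2 : ca * (z ^ b / -b) = ca / -b * z ^ b := by ring
        rw [add_mul, h2]
        exact add_le_add_left this _

theorem setLIntegral_comp_fst_le {α β : Type*} [MeasurableSpace α] [MeasurableSpace β]
    {μ : Measure α} {ν : Measure β} {s : Set (α × β)} {A : Set α} (hs : MeasurableSet s)
    (hA : MeasurableSet A) (hsA : ∀ q ∈ s, q.1 ∈ A) (g : α → ℝ≥0∞) :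
    ∫⁻ q in s, g q.1 ∂μ.prod ν ≤ ∫⁻ a in A, g a * ν (Prod.mk a ⁻¹' s) ∂μ := by
  calc ∫⁻ q in s, g q.1 ∂μ.prod ν
      = ∫⁻ q, s.indicator (fun q ↦ A.indicator g q.1) q ∂μ.prod ν := by
        rw [lintegral_indicator hs]
        exact setLIntegral_congr_fun hs fun q hq ↦ (indicator_of_mem (hsA q hq) g).symm
    _ ≤ ∫⁻ a, ∫⁻ b, s.indicator (fun q ↦ A.indicator g q.1) (a, b) ∂ν ∂μ :=
        lintegral_prod_le _
    _ = ∫⁻ a, A.indicator (fun a ↦ g a * ν (Prod.mk a ⁻¹' s)) a ∂μ := by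
        refine lintegral_congr fun a ↦ ?_
        rw [indicator_mul_left, ← lintegral_indicator_const (measurable_prodMk_left hs)]
        rfl
    _ = ∫⁻ a in A, g a * ν (Prod.mk a ⁻¹' s) ∂μ := lintegral_indicator hA _

section

variable {E F : Type*} [NormedAddCommGroup E] [MeasurableSpace E] [BorelSpace E]
  [NormedAddCommGroup F] [NormedSpace ℝ F] [FiniteDimensional ℝ F] [MeasurableSpace F]
  [BorelSpace F] (μ : Measure E) (ν : Measure F) [ν.IsAddHaarMeasure]

theorem setLIntegral_tail_le {a₁ a₂ B δ z : ℝ} {θ : E} {p : E × F → ℝ}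
    (hp : ∀ x, ‖p x‖ ≤ B) (hδ : 0 ≤ δ) (hμ : μ (closedBall θ δ) ≠ ∞) :
    ∫⁻ q in {q : ℝ × (E × F) | q.1 ∈ Ioo 0 1 ∧ ‖q.2.1 - θ‖ ≤ δ ∧
          (1 - q.1) * ‖q.2.2‖ ≤ δ ∧ z < 1 - q.1},
        ENNReal.ofReal ‖q.1 ^ (a₁ - 1) * (1 - q.1) ^ (a₂ - 1) * p q.2‖ ∂volume.prod (μ.prod ν)
      ≤ ENNReal.ofReal (B * μ.real (closedBall θ δ) * δ ^ finrank ℝ F * ν.real (closedBall 0 1))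
        * ∫⁻ α in Ioo 0 1 ∩ (fun α ↦ 1 - α) ⁻¹' Ioi z,
            ENNReal.ofReal (α ^ (a₁ - 1) * (1 - α) ^ (a₂ - finrank ℝ F - 1)) := by
  set S := {q : ℝ × (E × F) | q.1 ∈ Ioo 0 1 ∧ ‖q.2.1 - θ‖ ≤ δ ∧
    (1 - q.1) * ‖q.2.2‖ ≤ δ ∧ z < 1 - q.1}
  set A := Ioo (0 : ℝ) 1 ∩ (fun α ↦ 1 - α) ⁻¹' Ioi z
  have hS : MeasurableSet S :=
    (measurable_fst measurableSet_Ioo).inter <|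
      (measurableSet_le (f := fun q : ℝ × (E × F) ↦ ‖q.2.1 - θ‖) (by fun_prop)
        measurable_const).inter <|
      (measurableSet_le (f := fun q : ℝ × (E × F) ↦ (1 - q.1) * ‖q.2.2‖) (by fun_prop)
        measurable_const).inter <|
      measurableSet_lt (g := fun q : ℝ × (E × F) ↦ 1 - q.1) measurable_const (by fun_prop)
  have hA : MeasurableSet A := measurableSet_Ioo.inter (measurableSet_Ioi.preimage (by fun_prop))
  have hB : 0 ≤ B := (norm_nonneg _).trans (hp 0)
  have hsection : ∀ α ∈ A, Prod.mk α ⁻¹' S = closedBall θ δ ×ˢ closedBall 0 (δ / (1 - α)) := by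
    rintro α ⟨⟨hα0, hα1⟩, hαz : z < 1 - α⟩
    ext ⟨x, y⟩
    simp [S, hα0, hα1, hαz, dist_eq_norm, le_div_iff₀ (sub_pos.2 hα1), mul_comm]
  calc _ ≤ ∫⁻ q in S, ENNReal.ofReal (B * (q.1 ^ (a₁ - 1) * (1 - q.1) ^ (a₂ - 1)))
          ∂volume.prod (μ.prod ν) := by
        refine setLIntegral_mono' hS fun q hq ↦ ENNReal.ofReal_le_ofReal ?_
        have : 0 ≤ q.1 ^ (a₁ - 1) * (1 - q.1) ^ (a₂ - 1) :=
          mul_nonneg (Real.rpow_nonneg hq.1.1.le _) (Real.rpow_nonneg (by linarith [hq.1.2]) _)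
        rw [norm_mul, Real.norm_of_nonneg this, mul_comm B]
        exact mul_le_mul_of_nonneg_left (hp _) this
    _ ≤ ∫⁻ α in A, ENNReal.ofReal (B * (α ^ (a₁ - 1) * (1 - α) ^ (a₂ - 1)))
          * (μ.prod ν) (Prod.mk α ⁻¹' S) :=
        setLIntegral_comp_fst_le hS hA (fun q hq ↦ ⟨hq.1, hq.2.2.2⟩) _
    _ = _ := by
        rw [← lintegral_const_mul' _ _ ENNReal.ofReal_ne_top]
        refine setLIntegral_congr_fun hA fun α hα ↦ ?_
        have : 0 < 1 - α := by linarith [hα.1.2]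
        have hw : 0 ≤ α ^ (a₁ - 1) * (1 - α) ^ (a₂ - 1) :=
          mul_nonneg (Real.rpow_nonneg hα.1.1.le _) (Real.rpow_nonneg this.le _)
        rw [hsection α hα, Measure.prod_prod, Measure.addHaar_closedBall' ν 0 (by positivity),
          ← ofReal_measureReal hμ, ← ofReal_measureReal (measure_closedBall_lt_top (μ := ν)).ne,
          ← ENNReal.ofReal_mul (by positivity), ← ENNReal.ofReal_mul (by positivity),
          ← ENNReal.ofReal_mul (by positivity), ← ENNReal.ofReal_mul (by positivity)]
        congr 1
        rw [sub_right_comm a₂, Real.rpow_sub this (a₂ - 1) (finrank ℝ F), Real.rpow_natCast,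
          div_pow]
        field_simp

end

theorem stmt_17_general (d₁ d₂ : ℕ) (a₁ a₂ : ℝ)
    (ha₁ : 0 < a₁) (ha₂d : a₂ < d₂)
    (θstar : EuclideanSpace ℝ (Fin d₁))
    (p : EuclideanSpace ℝ (Fin d₁) × EuclideanSpace ℝ (Fin d₂) → ℝ)
    (B : ℝ) (hp0 : ∀ x, 0 ≤ p x) (hpB : ∀ x, p x ≤ B) :
    ∃ C : ℝ, 0 < C ∧ ∀ δ z : ℝ, 0 < δ → δ ≤ z → z < 1 →
      (∫ q in {q : ℝ × (EuclideanSpace ℝ (Fin d₁) × EuclideanSpace ℝ (Fin d₂)) |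
            q.1 ∈ Ioo (0:ℝ) 1 ∧ ‖q.2.1 - θstar‖ ≤ δ ∧
            (1 - q.1) * ‖q.2.2‖ ≤ δ ∧ z < 1 - q.1},
          q.1 ^ (a₁ - 1) * (1 - q.1) ^ (a₂ - 1) * p q.2)
        ≤ C * δ ^ ((d₁ : ℝ) + d₂) * z ^ (a₂ - d₂) / (d₂ - a₂) := by
  obtain ⟨K, hK0, hK⟩ := exists_setLIntegral_beta_tail_le ha₁ (sub_neg.2 ha₂d)
  set V₁ := (volume : Measure (EuclideanSpace ℝ (Fin d₁))).real (closedBall 0 1) with hV₁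
  set V₂ := (volume : Measure (EuclideanSpace ℝ (Fin d₂))).real (closedBall 0 1) with hV₂
  have hB : 0 ≤ B := (hp0 0).trans (hpB 0)
  have hd : 0 < (d₂ : ℝ) - a₂ := sub_pos.2 ha₂d
  refine ⟨max (B * V₁ * V₂ * K * (d₂ - a₂)) 1, lt_max_of_lt_right one_pos,
    fun δ z hδ hδz hz1 ↦ ?_⟩
  have hz : 0 < z := hδ.trans_le hδz
  have hlint := setLIntegral_tail_le volume volume (a₁ := a₁) (a₂ := a₂) (z := z) (θ := θstar)
    (fun x ↦ (Real.norm_of_nonneg (hp0 x)).trans_le (hpB x)) hδ.le measure_closedBall_lt_top.ne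
  rw [finrank_euclideanSpace_fin, Measure.addHaar_real_closedBall' _ _ hδ.le,
    finrank_euclideanSpace_fin, ← Measure.volume_eq_prod, ← Measure.volume_eq_prod] at hlint
  replace hlint := hlint.trans (mul_le_mul_right (hK z hz hz1.le) _)
  rw [← ENNReal.ofReal_mul (by positivity), ← hV₁, ← hV₂] at hlint
  refine (Real.le_norm_self _).trans <| (norm_integral_le_lintegral_norm _).trans <|
    (ENNReal.toReal_le_of_le_ofReal (by positivity) hlint).trans ?_
  rw [Real.rpow_add hδ, Real.rpow_natCast, Real.rpow_natCast, le_div_iff₀ hd]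
  calc _ = B * V₁ * V₂ * K * (d₂ - a₂) * (δ ^ d₁ * δ ^ d₂ * z ^ (a₂ - d₂)) := by ring
    _ ≤ max (B * V₁ * V₂ * K * (d₂ - a₂)) 1 * (δ ^ d₁ * δ ^ d₂ * z ^ (a₂ - d₂)) := by
        gcongr
        exact le_max_left _ _
    _ = _ := by ring

/-- Tail-mass bound in the embedded case: with a `Beta(a₁,a₂)` prior density
on the weight (`a₂ < d₂`) and a bounded prior density `p` on
`(θ₁,ψ) ∈ ℝ^{d₁} × ℝ^{d₂}`, the prior mass of
`{(α,θ₁,ψ) : ‖θ₁−θ₁*‖ ≤ δ, (1−α)‖ψ‖ ≤ δ, 1−α > z}` is bounded, up to a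
constant, by `δ^{d₁+d₂} z^{a₂−d₂}`. -/
theorem stmt_17 (d₁ d₂ : ℕ) (hd₂ : 0 < d₂) (a₁ a₂ : ℝ)
    (ha₁ : 0 < a₁) (ha₂ : 0 < a₂) (ha₂d : a₂ < d₂)
    (θstar : EuclideanSpace ℝ (Fin d₁))
    (p : EuclideanSpace ℝ (Fin d₁) × EuclideanSpace ℝ (Fin d₂) → ℝ)
    (B : ℝ) (hp0 : ∀ x, 0 ≤ p x) (hpB : ∀ x, p x ≤ B) :
    ∃ C : ℝ, 0 < C ∧ ∀ δ z : ℝ, 0 < δ → δ ≤ z → z < 1 →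
      (∫ q in {q : ℝ × (EuclideanSpace ℝ (Fin d₁) × EuclideanSpace ℝ (Fin d₂)) |
            q.1 ∈ Ioo (0:ℝ) 1 ∧ ‖q.2.1 - θstar‖ ≤ δ ∧
            (1 - q.1) * ‖q.2.2‖ ≤ δ ∧ z < 1 - q.1},
          q.1 ^ (a₁ - 1) * (1 - q.1) ^ (a₂ - 1) * p q.2)
        ≤ C * δ ^ ((d₁ : ℝ) + d₂) * z ^ (a₂ - d₂) / (d₂ - a₂) :=
  stmt_17_general d₁ d₂ a₁ a₂ ha₁ ha₂d θstar p B hp0 hpB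
end

section
/- Identifiability of two-component mixtures of a Poisson and a Geometric with common mean: if α P(λ) + (1−α) Geo(1/(1+λ)) = α' P(λ') + (1−α') Geo(1/(1+λ')) as distributions on ℕ, with α, α' ∈ (0,1) and λ, λ' > 0, then α = α' and λ = λ'. -/
/-!
Multiplying the pmf by `((1 + λ) / λ) ^ k` kills the Poisson part, whose decay is
super-geometric, and turns the geometric part into the constant `(1 - α) / (1 + λ)`.
If `λ' < λ`, the same rescaling sends the other mixture to `0`, forcing `α = 1`; hence
`λ = λ'`, and then the value at `k = 0`, which is affine in `α` with slope
`e^{-λ} - 1 / (1 + λ) ≠ 0`, gives `α = α'`.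
-/

open Filter Topology Nat

noncomputable section

namespace PoissonGeomMixture

def pmf (α l : ℝ) (k : ℕ) : ℝ :=
  α * (Real.exp (-l) * l ^ k / (k ! : ℝ)) + (1 - α) * (l ^ k / (1 + l) ^ (k + 1))

lemma tendsto_poisson_mul_pow (l c : ℝ) :
    Tendsto (fun k : ℕ => Real.exp (-l) * l ^ k / (k ! : ℝ) * c ^ k) atTop (𝓝 0) := by
  have := (FloorSemiring.tendsto_pow_div_factorial_atTop (l * c)).const_mul (Real.exp (-l))
  rw [mul_zero] at this
  refine this.congr fun k => ?_
  rw [mul_pow]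
  ring

lemma pmf_mul_pow (α l c : ℝ) (hl : 1 + l ≠ 0) (k : ℕ) :
    pmf α l k * c ^ k = α * (Real.exp (-l) * l ^ k / (k ! : ℝ) * c ^ k)
      + (1 - α) / (1 + l) * (l * c / (1 + l)) ^ k := by
  rw [pmf, div_pow, mul_pow, pow_succ]
  field_simp

lemma tendsto_pmf_mul_pow {α l c L : ℝ} (hl : 0 < l)
    (hgeom : Tendsto (fun k : ℕ => (l * c / (1 + l)) ^ k) atTop (𝓝 L)) :
    Tendsto (fun k => pmf α l k * c ^ k) atTop (𝓝 ((1 - α) / (1 + l) * L)) := by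
  have := ((tendsto_poisson_mul_pow l c).const_mul α).add (hgeom.const_mul ((1 - α) / (1 + l)))
  rw [mul_zero, zero_add] at this
  exact this.congr fun k => (pmf_mul_pow α l c (by positivity) k).symm

lemma tendsto_pmf_mul_inv_ratio_pow (α : ℝ) {l : ℝ} (hl : 0 < l) :
    Tendsto (fun k => pmf α l k * ((1 + l) / l) ^ k) atTop (𝓝 ((1 - α) / (1 + l))) := by
  have hratio : l * ((1 + l) / l) / (1 + l) = 1 := by field_simp
  simpa [hratio] using tendsto_pmf_mul_pow (α := α) hl (c := (1 + l) / l) (L := 1)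

lemma tendsto_pmf_mul_inv_ratio_pow_of_lt (α' : ℝ) {l l' : ℝ} (hl' : 0 < l') (hlt : l' < l) :
    Tendsto (fun k => pmf α' l' k * ((1 + l) / l) ^ k) atTop (𝓝 0) := by
  have hl : 0 < l := hl'.trans hlt
  have hq : l' * ((1 + l) / l) / (1 + l') < 1 := by
    rw [div_lt_one (by positivity), mul_div_assoc', div_lt_iff₀ hl]
    nlinarith
  simpa using tendsto_pmf_mul_pow (α := α') hl'
    (tendsto_pow_atTop_nhds_zero_of_lt_one (by positivity) hq)

lemma eq_one_of_pmf_eq_of_lt {α α' l l' : ℝ} (hl' : 0 < l') (hlt : l' < l)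
    (h : pmf α l = pmf α' l') : α = 1 := by
  have hl : 0 < l := hl'.trans hlt
  have hlim := tendsto_pmf_mul_inv_ratio_pow α hl
  rw [h] at hlim
  have := tendsto_nhds_unique hlim (tendsto_pmf_mul_inv_ratio_pow_of_lt α' hl' hlt)
  rw [div_eq_zero_iff] at this
  rcases this with h1 | h1 <;> linarith

lemma pmf_zero (α l : ℝ) :
    pmf α l 0 = 1 / (1 + l) + α * (Real.exp (-l) - 1 / (1 + l)) := by
  simp only [pmf, pow_zero, factorial_zero, cast_one, zero_add, pow_one]
  ring

lemma exp_neg_lt_inv_one_add {l : ℝ} (hl : 0 < l) : Real.exp (-l) < 1 / (1 + l) := by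
  rw [Real.exp_neg, one_div]
  exact inv_strictAnti₀ (by positivity) (by linarith [Real.add_one_lt_exp hl.ne'])

lemma left_eq_of_pmf_zero_eq {α α' l : ℝ} (hl : 0 < l) (h : pmf α l 0 = pmf α' l 0) :
    α = α' := by
  rw [pmf_zero, pmf_zero, add_right_inj] at h
  exact mul_right_cancel₀ (sub_ne_zero.2 (exp_neg_lt_inv_one_add hl).ne) h

end PoissonGeomMixture

end

/-- Identifiability of two-component mixtures of a Poisson and a Geometric
distribution with common mean: if
`α P(λ) + (1−α) Geo(1/(1+λ)) = α' P(λ') + (1−α') Geo(1/(1+λ'))` as pmfs on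
`ℕ`, with `α, α' ∈ (0,1)` and `λ, λ' > 0`, then `α = α'` and `λ = λ'`. -/
theorem stmt_19 (α α' l l' : ℝ)
    (hα : α ∈ Set.Ioo (0:ℝ) 1) (hα' : α' ∈ Set.Ioo (0:ℝ) 1)
    (hl : 0 < l) (hl' : 0 < l')
    (h : ∀ k : ℕ,
      α * (Real.exp (-l) * l ^ k / (Nat.factorial k : ℝ))
        + (1 - α) * (l ^ k / (1 + l) ^ (k + 1))
      = α' * (Real.exp (-l') * l' ^ k / (Nat.factorial k : ℝ))
        + (1 - α') * (l' ^ k / (1 + l') ^ (k + 1))) :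
    α = α' ∧ l = l' := by
  have hpmf : PoissonGeomMixture.pmf α l = PoissonGeomMixture.pmf α' l' := funext h
  have hll : l = l' := by
    rcases lt_trichotomy l' l with hlt | heq | hlt
    · exact absurd (PoissonGeomMixture.eq_one_of_pmf_eq_of_lt hl' hlt hpmf) hα.2.ne
    · exact heq.symm
    · exact absurd (PoissonGeomMixture.eq_one_of_pmf_eq_of_lt hl hlt hpmf.symm) hα'.2.ne
  subst hll
  exact ⟨PoissonGeomMixture.left_eq_of_pmf_zero_eq hl (congrFun hpmf 0), rfl⟩
end
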